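/- Let P ⊆ N, Q ⊆ P, and A ⊆ [n], and set M = Γ_*(P) \ Γ_*(P \ Q) \ 2^A. Then M = Γ^*(M) ∩ Γ_*(P). -/
import Mathlib


open Set

def subsetCompletion {n : ℕ} (P : Set (Set (Fin n))) : Set (Set (Fin n)) :=
  {K | ∃ J ∈ P, K ⊆ J}

def supersetCompletion {n : ℕ} (M : Set (Set (Fin n))) : Set (Set (Fin n)) :=
  {J | ∃ K ∈ M, K ⊆ J}

theorem stmt_8 (n : ℕ) (hn : 0 < n) (P Q : Set (Set (Fin n))) (hQ : Q ⊆ P)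
    (A : Set (Fin n))
    (M : Set (Set (Fin n)))
    (hM : M = (subsetCompletion P \ subsetCompletion (P \ Q)) \ Set.powerset A) :
    M = supersetCompletion M ∩ subsetCompletion P := by
  subst hM
  ext J
  constructor
  · rintro ⟨⟨hP, hnPQ⟩, hnA⟩
    exact ⟨⟨J, ⟨⟨hP, hnPQ⟩, hnA⟩, subset_rfl⟩, hP⟩
  · rintro ⟨⟨K, ⟨⟨hKP, hKnPQ⟩, hKnA⟩, hKJ⟩, hJP⟩
    refine ⟨⟨hJP, fun ⟨L, hL, hJL⟩ => hKnPQ ⟨L, hL, hKJ.trans hJL⟩⟩,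
      fun hJA => hKnA (hKJ.trans hJA)⟩
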